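/- arXiv:1807.06312 — 4 statements merged into one kernel-verified Lean document; each statement's English description precedes it below -/
import Mathlib

section
/- The n×n matrix A with entries A_{uv} = ∑_{i=max{0,v-u}}^{min{v-1,n-u}} C(v-1,i)(1-β)^{v-1-i} β^i C(n-v, u-v+i) α^{u-v+i} (1-α)^{n-u-i}, for u,v ∈ {1,…,n}, has determinant det A = (1-α-β)^{n(n-1)/2}. -/
/-!
Column `v` of the matrix lists the coefficients of `p ^ v * q ^ (n - 1 - v)` with
`p = (1 - β) X + β` and `q = α X + (1 - α)`, i.e. it is the matrix of the `(n - 1)`-st symmetric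
power of the `2 × 2` matrix `[[1 - β, α], [β, 1 - α]]`, whose determinant is `1 - α - β`.
When `1 - α ≠ 0` write `p = a X + e q`; expanding `p ^ v` binomially factors the matrix as a
lower triangular one (columns `X ^ j * q ^ (n - 1 - j)`, diagonal `(1 - α) ^ (n - 1 - j)`) times
an upper triangular one (columns `(a X + e) ^ v`, diagonal `a ^ j`). The case `α = 1` follows
by continuity in `α`.
-/

open Finset

/-- Entry `A_{u+1, v+1}` (0-indexed) of the degree-distribution transition matrix:
the probability that a vertex of true degree `v` in an `n`-node network is observed
with degree `u`, when present links are deleted with probability `β` and absent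
links are added with probability `α`. -/
noncomputable def Aent (n : ℕ) (α β : ℝ) (u v : ℕ) : ℝ :=
  ∑ i ∈ Finset.Icc (v - u) (min v (n - 1 - u)),
    (v.choose i : ℝ) * (1 - β) ^ (v - i) * β ^ i *
      ((n - 1 - v).choose (i + u - v) : ℝ) * α ^ (i + u - v) * (1 - α) ^ (n - 1 - u - i)

/-- The `n × n` transition matrix `A(n, α, β)`. -/
noncomputable def Amat (n : ℕ) (α β : ℝ) : Matrix (Fin n) (Fin n) ℝ :=
  fun u v => Aent n α β u v

open Polynomial

theorem Polynomial.coeff_C_mul_X_add_C_pow {R : Type*} [CommSemiring R] (a b : R) (m k : ℕ) :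
    ((C a * X + C b) ^ m).coeff k = m.choose k * a ^ k * b ^ (m - k) := by
  rw [add_pow, finsetSum_coeff]
  simp_rw [mul_pow, ← C_pow, mul_comm (C (a ^ _)), ← C_eq_natCast, mul_assoc, ← C_mul,
    mul_comm (X ^ _), coeff_C_mul_X_pow]
  rw [Finset.sum_ite_eq]
  split_ifs with hk
  · ring
  · rw [Finset.mem_range, not_lt] at hk
    rw [Nat.choose_eq_zero_of_lt (by omega)]
    simp

theorem Polynomial.pow_mul_pow_eq_sum_coeff {R : Type*} [CommSemiring R] (a e : R) (q : R[X])
    {v m : ℕ} (hv : v ≤ m) :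
    (C a * X + C e * q) ^ v * q ^ (m - v) =
      ∑ j ∈ range (m + 1), C (((C a * X + C e) ^ v).coeff j) * (X ^ j * q ^ (m - j)) := by
  have hvanish : ∀ j ∈ range (m + 1), j ∉ range (v + 1) →
      C (((C a * X + C e) ^ v).coeff j) * (X ^ j * q ^ (m - j)) = 0 := by
    intro j _ hj
    rw [Finset.mem_range, not_lt] at hj
    rw [coeff_C_mul_X_add_C_pow, Nat.choose_eq_zero_of_lt (by omega)]
    simp
  rw [← Finset.sum_subset (Finset.range_subset_range.mpr (by omega)) hvanish, add_pow,
    Finset.sum_mul]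
  refine Finset.sum_congr rfl fun j hj => ?_
  rw [Finset.mem_range] at hj
  rw [coeff_C_mul_X_add_C_pow, show m - j = v - j + (m - v) by omega, pow_add]
  simp only [map_mul, map_pow, map_natCast, mul_pow]
  ring

theorem Fin.prod_pow_val {M : Type*} [CommMonoid M] (x : M) (n : ℕ) :
    ∏ j : Fin n, x ^ (j : ℕ) = x ^ (n * (n - 1) / 2) := by
  rw [Finset.prod_pow_eq_pow_sum, Fin.sum_univ_eq_sum_range (fun j => j), Finset.sum_range_id]

theorem Fin.prod_pow_sub_one_sub_val {M : Type*} [CommMonoid M] (x : M) (n : ℕ) :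
    ∏ j : Fin n, x ^ (n - 1 - j) = x ^ (n * (n - 1) / 2) := by
  rw [← Fin.prod_pow_val]
  exact Fintype.prod_equiv Fin.revPerm _ _ fun j => by
    rw [Fin.revPerm_apply, Fin.val_rev]; congr 1; omega

section CoeffMatrix

variable {R : Type*} [CommRing R]

noncomputable def powMulPowCoeffMatrix (n : ℕ) (p q : R[X]) : Matrix (Fin n) (Fin n) R :=
  fun u v => (p ^ (v : ℕ) * q ^ (n - 1 - v)).coeff u

theorem powMulPowCoeffMatrix_eq_mul (n : ℕ) (a e : R) (q : R[X]) :
    powMulPowCoeffMatrix n (C a * X + C e * q) q =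
      powMulPowCoeffMatrix n X q * powMulPowCoeffMatrix n (C a * X + C e) 1 := by
  ext u v
  have hn : n - 1 + 1 = n := Nat.sub_add_cancel (Nat.one_le_of_lt v.isLt)
  have hexp := pow_mul_pow_eq_sum_coeff a e q (Nat.le_sub_one_of_lt v.isLt)
  rw [hn, Finset.sum_range] at hexp
  simp only [powMulPowCoeffMatrix, Matrix.mul_apply, one_pow, mul_one]
  rw [hexp, finsetSum_coeff]
  exact Finset.sum_congr rfl fun j _ => by rw [coeff_C_mul, mul_comm]

theorem det_powMulPowCoeffMatrix_X (n : ℕ) (c d : R) :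
    (powMulPowCoeffMatrix n X (C c * X + C d)).det = d ^ (n * (n - 1) / 2) := by
  rw [Matrix.det_of_isLowerTriangular _ fun u j h => ?_, ← Fin.prod_pow_sub_one_sub_val]
  · refine Finset.prod_congr rfl fun j _ => ?_
    simp [powMulPowCoeffMatrix, coeff_X_pow_mul', coeff_C_mul_X_add_C_pow]
  · have hju : ¬ j ≤ u := not_le.mpr h
    simp [powMulPowCoeffMatrix, coeff_X_pow_mul', hju]

theorem det_powMulPowCoeffMatrix_one (n : ℕ) (a b : R) :
    (powMulPowCoeffMatrix n (C a * X + C b) 1).det = a ^ (n * (n - 1) / 2) := by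
  rw [Matrix.det_of_isUpperTriangular fun j v h => ?_, ← Fin.prod_pow_val]
  · refine Finset.prod_congr rfl fun j _ => ?_
    simp [powMulPowCoeffMatrix, coeff_C_mul_X_add_C_pow]
  · have hvj : (v : ℕ) < j := h
    simp [powMulPowCoeffMatrix, coeff_C_mul_X_add_C_pow, Nat.choose_eq_zero_of_lt hvj]

end CoeffMatrix

theorem det_powMulPowCoeffMatrix {K : Type*} [Field K] (n : ℕ) (a b c d : K) (hd : d ≠ 0) :
    (powMulPowCoeffMatrix n (C a * X + C b) (C c * X + C d)).det =
      (a * d - b * c) ^ (n * (n - 1) / 2) := by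
  have hp : C a * X + C b = C ((a * d - b * c) / d) * X + C (b / d) * (C c * X + C d) := by
    rw [mul_add, ← mul_assoc, ← C_mul, ← C_mul, ← add_assoc, ← add_mul, ← C_add]
    congr 3 <;> field_simp
    ring
  rw [hp, powMulPowCoeffMatrix_eq_mul, Matrix.det_mul, det_powMulPowCoeffMatrix_X,
    det_powMulPowCoeffMatrix_one, ← mul_pow, mul_div_cancel₀ _ hd]

theorem Aent_eq_coeff (n : ℕ) (α β : ℝ) (u : ℕ) {v : ℕ} (hv : v < n) :
    Aent n α β u v =
      ((C (1 - β) * X + C β) ^ v * (C α * X + C (1 - α)) ^ (n - 1 - v)).coeff u := by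
  -- `Aent` sums over the number `i` of deleted links, the coefficient over the number
  -- `k = v - i` of kept ones; only `k` in `hsupp`'s interval contribute.
  set term : ℕ → ℝ := fun k => (v.choose k * (1 - β) ^ k * β ^ (v - k)) *
      ((n - 1 - v).choose (u - k) * α ^ (u - k) * (1 - α) ^ (n - 1 - v - (u - k)))
  have hsupp : Icc (v - min v (n - 1 - u)) (min u v) ⊆ range (u + 1) := fun k hk => by
    simp only [mem_Icc, mem_range] at hk ⊢; omega
  have hvanish : ∀ k ∈ range (u + 1), k ∉ Icc (v - min v (n - 1 - u)) (min u v) → term k = 0 := by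
    intro k hk hk'
    simp only [mem_range, mem_Icc, not_and_or, not_le] at hk hk'
    rcases hk' with hk' | hk'
    · simp [term, Nat.choose_eq_zero_of_lt (show n - 1 - v < u - k by omega)]
    · simp [term, Nat.choose_eq_zero_of_lt (show v < k by omega)]
  rw [coeff_mul, Nat.sum_antidiagonal_eq_sum_range_succ_mk]
  simp only [coeff_C_mul_X_add_C_pow]
  rw [← Finset.sum_subset hsupp hvanish, Aent]
  refine Finset.sum_nbij' (v - ·) (v - ·) ?_ ?_ ?_ ?_ fun i hi => ?_ <;>
    simp only [mem_Icc] at *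
  · intro i hi; omega
  · intro k hk; omega
  · intro i hi; omega
  · intro k hk; omega
  · dsimp only [term]
    rw [Nat.choose_symm_of_eq_add (show v = i + (v - i) by omega), show v - (v - i) = i by omega,
      show u - (v - i) = i + u - v by omega, show n - 1 - v - (i + u - v) = n - 1 - u - i by omega]
    ring

theorem Amat_eq_powMulPowCoeffMatrix (n : ℕ) (α β : ℝ) :
    Amat n α β = powMulPowCoeffMatrix n (C (1 - β) * X + C β) (C α * X + C (1 - α)) := by
  ext u v
  exact Aent_eq_coeff n α β u v.isLt

theorem continuous_det_Amat (n : ℕ) (β : ℝ) : Continuous fun α => (Amat n α β).det :=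
  Continuous.matrix_det <| continuous_matrix fun u v => by
    unfold Amat Aent
    fun_prop

theorem det_Amat_general (n : ℕ) (α β : ℝ) :
    (Amat n α β).det = (1 - α - β) ^ (n * (n - 1) / 2) := by
  have hgeneric : Set.EqOn (fun α => (Amat n α β).det)
      (fun α => (1 - α - β) ^ (n * (n - 1) / 2)) {1}ᶜ := fun α hα => by
    dsimp only
    rw [Amat_eq_powMulPowCoeffMatrix,
      det_powMulPowCoeffMatrix _ _ _ _ _ (sub_ne_zero.mpr (Ne.symm hα))]
    congr 1
    ring
  exact congrFun ((continuous_det_Amat n β).ext_on (dense_compl_singleton 1) (by fun_prop)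
    hgeneric) α

theorem det_Amat (n : ℕ) (hn : 1 ≤ n) (α β : ℝ)
    (hα : α ∈ Set.Icc (0 : ℝ) 1) (hβ : β ∈ Set.Icc (0 : ℝ) 1) :
    (Amat n α β).det = (1 - α - β) ^ (n * (n - 1) / 2) :=
  det_Amat_general n α β
end

section
/- When β = 1 - α, every entry of A(n, α, 1-α) in row u equals C(n-1, u-1) α^{u-1} (1-α)^{n-u}; in particular each row of A is constant and hence det A(n, α, 1-α) = 0 for n ≥ 2. -/
open Finset

/-- `Nat.add_choose_eq` reindexed along `i ↦ (v - i, i + u - v)`. The lower bound on `i` matters: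
below `v - u` the truncated subtraction `i + u - v` would contribute junk terms. -/
theorem Nat.sum_Icc_choose_mul_choose_eq_choose {N v : ℕ} (u : ℕ) (hv : v ≤ N) :
    ∑ i ∈ Icc (v - u) (min v (N - u)), v.choose i * (N - v).choose (i + u - v) =
      N.choose u := by
  conv_rhs => rw [← Nat.add_sub_cancel' hv, Nat.add_choose_eq]
  refine sum_bij_ne_zero (fun i _ _ => (v - i, i + u - v)) ?mem ?inj ?surj ?eq
  case mem =>
    intro i hi _
    rw [mem_Icc] at hi
    rw [HasAntidiagonal.mem_antidiagonal]
    omega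
  case inj =>
    intro i hi _ j hj _ hij
    rw [mem_Icc] at hi hj
    simp only [Prod.mk.injEq] at hij
    omega
  case surj =>
    rintro ⟨a, b⟩ hab hne
    rw [HasAntidiagonal.mem_antidiagonal] at hab
    have ha : a ≤ v := by
      by_contra! h
      simp [Nat.choose_eq_zero_of_lt h] at hne
    have hb : b ≤ N - v := by
      by_contra! h
      simp [Nat.choose_eq_zero_of_lt h] at hne
    refine ⟨v - a, mem_Icc.mpr ⟨by omega, by omega⟩, ?_, ?_⟩
    · rwa [Nat.choose_symm ha, show v - a + u - v = b by omega]
    · simp only [Prod.mk.injEq]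
      omega
  case eq =>
    intro i hi _
    rw [mem_Icc, le_min_iff] at hi
    rw [Nat.choose_symm hi.2.1]

theorem Matrix.det_eq_zero_of_apply_eq_apply {n R : Type*} [Fintype n] [DecidableEq n]
    [Nontrivial n] [CommRing R] {M : Matrix n n R} (h : ∀ i j j', M i j = M i j') :
    M.det = 0 :=
  let ⟨j, j', hjj'⟩ := exists_pair_ne n
  det_zero_of_column_eq hjj' fun i => h i j j'

/-- With `β = 1 - α` an observed link is present with probability `α` whatever the true
degree, so every term carries the same weight `α ^ u * (1 - α) ^ (n - 1 - u)`. -/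
theorem Aent_one_sub (n : ℕ) (α : ℝ) (u : ℕ) {v : ℕ} (hv : v ≤ n - 1) :
    Aent n α (1 - α) u v = ((n - 1).choose u : ℝ) * α ^ u * (1 - α) ^ (n - 1 - u) := by
  have hterm : ∀ i ∈ Icc (v - u) (min v (n - 1 - u)),
      (v.choose i : ℝ) * (1 - (1 - α)) ^ (v - i) * (1 - α) ^ i *
          ((n - 1 - v).choose (i + u - v) : ℝ) * α ^ (i + u - v) * (1 - α) ^ (n - 1 - u - i) =
        ((v.choose i * (n - 1 - v).choose (i + u - v) : ℕ) : ℝ) *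
          (α ^ u * (1 - α) ^ (n - 1 - u)) := by
    intro i hi
    rw [mem_Icc, le_min_iff] at hi
    have hα : α ^ (v - i) * α ^ (i + u - v) = α ^ u := by
      rw [← pow_add]; congr 1; omega
    have hα' : (1 - α) ^ i * (1 - α) ^ (n - 1 - u - i) = (1 - α) ^ (n - 1 - u) := by
      rw [← pow_add]; congr 1; omega
    rw [sub_sub_cancel, Nat.cast_mul, ← hα, ← hα']
    ring
  rw [Aent, sum_congr rfl hterm, ← sum_mul, ← Nat.cast_sum,
    Nat.sum_Icc_choose_mul_choose_eq_choose u hv, mul_assoc]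

theorem Amat_rows_constant_of_beta_eq_one_sub_alpha_general (n : ℕ) (hn : 2 ≤ n) (α : ℝ) :
    (∀ u v : Fin n, Amat n α (1 - α) u v =
      ((n - 1).choose (u : ℕ) : ℝ) * α ^ (u : ℕ) * (1 - α) ^ (n - 1 - (u : ℕ))) ∧
    (Amat n α (1 - α)).det = 0 := by
  have hrow : ∀ u v : Fin n, Amat n α (1 - α) u v =
      ((n - 1).choose (u : ℕ) : ℝ) * α ^ (u : ℕ) * (1 - α) ^ (n - 1 - (u : ℕ)) :=
    fun u v => Aent_one_sub n α u (Nat.le_sub_one_of_lt v.isLt)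
  have : Nontrivial (Fin n) := Fin.nontrivial_iff_two_le.mpr hn
  exact ⟨hrow, Matrix.det_eq_zero_of_apply_eq_apply fun u v v' =>
    (hrow u v).trans (hrow u v').symm⟩

theorem Amat_rows_constant_of_beta_eq_one_sub_alpha (n : ℕ) (hn : 2 ≤ n) (α : ℝ)
    (hα : α ∈ Set.Icc (0 : ℝ) 1) :
    (∀ u v : Fin n, Amat n α (1 - α) u v =
      ((n - 1).choose (u : ℕ) : ℝ) * α ^ (u : ℕ) * (1 - α) ^ (n - 1 - (u : ℕ))) ∧
    (Amat n α (1 - α)).det = 0 :=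
  Amat_rows_constant_of_beta_eq_one_sub_alpha_general n hn α
end

section
/- For α = 1 and β ∉ {0,1}, A(n, 1, β) has entries A_{uv} = C(v-1, n-u)(1-β)^{v-1-n+u} β^{n-u} when u ≥ n-v+1 and 0 when u < n-v+1; consequently det A(n,1,β) = (-β)^{n(n-1)/2}. -/
/-!
When `α = 1` the factor `(1 - α) ^ (n - 1 - u - i)` kills every summand of an entry except
`i = n - 1 - u`, which leaves the closed form; it vanishes for `u + v < n - 1`. Reversing the
rows therefore gives an upper triangular matrix with diagonal `1, β, …, β ^ (n - 1)`, and the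
reversal of `n` rows has sign `(-1) ^ (n (n - 1) / 2)`.
-/

open Finset

lemma Aent_one (β : ℝ) {n u v : ℕ} (hu : u < n) (hv : v < n) :
    Aent n 1 β u v =
      if n - 1 ≤ u + v then
        (v.choose (n - 1 - u) : ℝ) * (1 - β) ^ (u + v - (n - 1)) * β ^ (n - 1 - u)
      else 0 := by
  unfold Aent
  simp only [sub_self, one_pow, mul_one]
  split_ifs with h
  · rw [sum_eq_single_of_mem (n - 1 - u) (by simp only [mem_Icc]; omega)]
    · rw [show n - 1 - u + u - v = n - 1 - v by omega,
        show v - (n - 1 - u) = u + v - (n - 1) by omega, Nat.choose_self, Nat.sub_self, pow_zero]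
      push_cast
      ring
    · intro i hi hne
      simp only [mem_Icc] at hi
      rw [zero_pow (by omega), mul_zero]
  · refine sum_eq_zero fun i hi => ?_
    simp only [mem_Icc] at hi
    rw [zero_pow (by omega), mul_zero]

/-- Removing the last point, `rev` on `Fin (n + 1)` is `rev` on `Fin n` composed with an
`(n + 1)`-cycle, so the exponent grows by `n`. -/
theorem Fin.sign_revPerm (n : ℕ) :
    Equiv.Perm.sign (Fin.revPerm : Equiv.Perm (Fin n)) = (-1) ^ (n * (n - 1) / 2) := by
  induction n with
  | zero => rfl
  | succ n ih =>
    have hdecomp : (Fin.revPerm : Equiv.Perm (Fin (n + 1))) =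
        Equiv.Perm.decomposeFin.symm (0, Fin.revPerm) * finRotate (n + 1) := by
      ext i
      refine Fin.lastCases ?_ (fun j => ?_) i
      · simp [Fin.rev_last]
      · simp only [Equiv.Perm.mul_apply, finRotate_apply, Fin.coeSucc_eq_succ,
          Equiv.Perm.decomposeFin_symm_apply_succ, Equiv.swap_self, Fin.revPerm_apply,
          Fin.rev_castSucc, Equiv.refl_apply]
    rw [hdecomp, map_mul, Equiv.Perm.decomposeFin.symm_sign, sign_finRotate, ih, if_pos rfl,
      one_mul, ← pow_add, Nat.add_sub_cancel]
    congr 1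
    rcases n with _ | m
    · rfl
    · rw [Nat.add_sub_cancel, show (m + 1 + 1) * (m + 1) = (m + 1) * m + (m + 1) * 2 by ring,
        Nat.add_mul_div_right _ _ two_pos]

theorem Matrix.det_of_isUpperTriangular_submatrix_revPerm {R : Type*} [CommRing R] {n : ℕ}
    {M : Matrix (Fin n) (Fin n) R} (h : (M.submatrix Fin.revPerm id).IsUpperTriangular) :
    M.det = (-1) ^ (n * (n - 1) / 2) * ∏ i, M i.rev i := by
  have hperm := Matrix.det_permute Fin.revPerm M
  rw [Matrix.det_of_isUpperTriangular h, Fin.sign_revPerm] at hperm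
  simp only [Matrix.submatrix_apply, Fin.revPerm_apply, id] at hperm
  rw [hperm]
  push_cast
  rw [← mul_assoc, ← mul_pow, neg_one_mul, neg_neg, one_pow, one_mul]

theorem Amat_alpha_one_general (n : ℕ) (β : ℝ) :
    (∀ u v : Fin n, Amat n 1 β u v =
      if n - 1 ≤ (u : ℕ) + (v : ℕ) then
        ((v : ℕ).choose (n - 1 - (u : ℕ)) : ℝ) *
          (1 - β) ^ ((u : ℕ) + (v : ℕ) - (n - 1)) * β ^ (n - 1 - (u : ℕ))
      else 0) ∧
    (Amat n 1 β).det = (-β) ^ (n * (n - 1) / 2) := by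
  have hent : ∀ u v : Fin n, Amat n 1 β u v = _ := fun u v => Aent_one β u.isLt v.isLt
  refine ⟨hent, ?_⟩
  have htri : ((Amat n 1 β).submatrix Fin.revPerm id).IsUpperTriangular := by
    intro i j hij
    simp only [Matrix.submatrix_apply, Fin.revPerm_apply, id, hent, Fin.val_rev]
    rw [if_neg (by simp only [id] at hij; omega)]
  have hanti : ∀ i : Fin n, Amat n 1 β i.rev i = β ^ (i : ℕ) := by
    intro i
    rw [hent, Fin.val_rev, if_pos (by omega), show n - 1 - (n - (i + 1)) = i by omega,
      show n - (i + 1) + i - (n - 1) = 0 by omega, Nat.choose_self]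
    simp
  rw [Matrix.det_of_isUpperTriangular_submatrix_revPerm htri, prod_congr rfl fun i _ => hanti i,
    prod_pow_eq_pow_sum, Fin.sum_univ_eq_sum_range (fun i => i) n, sum_range_id]
  exact (neg_pow β _).symm

theorem Amat_alpha_one (n : ℕ) (hn : 1 ≤ n) (β : ℝ) (hβ : β ∈ Set.Ioo (0 : ℝ) 1) :
    (∀ u v : Fin n, Amat n 1 β u v =
      if n - 1 ≤ (u : ℕ) + (v : ℕ) then
        ((v : ℕ).choose (n - 1 - (u : ℕ)) : ℝ) *
          (1 - β) ^ ((u : ℕ) + (v : ℕ) - (n - 1)) * β ^ (n - 1 - (u : ℕ))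
      else 0) ∧
    (Amat n 1 β).det = (-β) ^ (n * (n - 1) / 2) :=
  Amat_alpha_one_general n β
end

section
/- Semigroup property: for α₁, α₂, β₁, β₂ ∈ [0,1], the product A(n, α₂, β₂) · A(n, α₁, β₁) equals A(n, α, β) where α = α₁(1-β₂) + (1-α₁)α₂ and β = β₁(1-α₂) + (1-β₁)β₂. -/
open Finset

/-!
Column `v` of `A(N+1, α, β)` is the coefficient list of the generating polynomial
`(β + (1-β) X)^v (α X + (1-α))^(N-v)`: each of the `v` present links contributes the factor
`β + (1-β) X`, each of the `N - v` absent ones the factor `(1-α) + α X`. More generally, with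
`Q` marking a link that is present after perturbation and `S` one that is absent,
`(β S + (1-β) Q)^v (α Q + (1-α) S)^(N-v) = ∑_w A_{wv} Q^w S^(N-w)`.
Substituting for `Q` and `S` the one-link polynomials of a second perturbation stage turns the
right-hand side into `∑_w A¹_{wv} · (column w of A²)`, i.e. into column `v` of `A² A¹`, and
the left-hand side into the generating polynomial of the composed perturbation.
-/

open Polynomial

theorem add_pow_mul_add_pow_eq_sum {R : Type*} [CommSemiring R] (a b c d Q S : R)
    {N v : ℕ} (hv : v ≤ N) :
    (b * S + a * Q) ^ v * (c * Q + d * S) ^ (N - v) =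
      ∑ w ∈ range (N + 1),
        (∑ i ∈ Icc (v - w) (min v (N - w)),
          (v.choose i : R) * a ^ (v - i) * b ^ i *
            ((N - v).choose (i + w - v) : R) * c ^ (i + w - v) * d ^ (N - w - i)) *
          Q ^ w * S ^ (N - w) := by
  rw [add_pow, add_pow, sum_mul_sum]
  simp only [sum_mul]
  rw [sum_sigma', sum_sigma']
  -- `i` deleted present links and `j` added absent ones give observed degree `w = v - i + j`
  refine sum_nbij' (fun p => ⟨v - p.1 + p.2, p.1⟩) (fun p => ⟨p.2, p.2 + p.1 - v⟩)
    ?_ ?_ ?_ ?_ ?_ <;>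
  rintro ⟨i, j⟩ hp <;>
  simp only [mem_sigma, mem_range, mem_Icc, Nat.lt_succ_iff, le_min_iff] at hp ⊢
  · omega
  · omega
  · rw [show i + (v - i + j) - v = j by omega]
  · rw [show v - j + (j + i - v) = i by omega]
  · rw [show i + (v - i + j) - v = j by omega, show N - (v - i + j) = i + (N - v - j) by omega,
      Nat.add_sub_cancel_left, pow_add, pow_add]
    ring

theorem Aent_succ (N : ℕ) (α β : ℝ) (u v : ℕ) :
    Aent (N + 1) α β u v =
      ∑ i ∈ Icc (v - u) (min v (N - u)),
        (v.choose i : ℝ) * (1 - β) ^ (v - i) * β ^ i *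
          ((N - v).choose (i + u - v) : ℝ) * α ^ (i + u - v) * (1 - α) ^ (N - u - i) := by
  simp only [Aent, Nat.add_sub_cancel]

theorem pow_mul_pow_eq_sum_Aent {R : Type*} [CommRing R] [Algebra ℝ R] (α β : ℝ) (Q S : R)
    {N v : ℕ} (hv : v ≤ N) :
    (algebraMap ℝ R β * S + algebraMap ℝ R (1 - β) * Q) ^ v *
        (algebraMap ℝ R α * Q + algebraMap ℝ R (1 - α) * S) ^ (N - v) =
      ∑ w ∈ range (N + 1), algebraMap ℝ R (Aent (N + 1) α β w v) * Q ^ w * S ^ (N - w) := by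
  rw [add_pow_mul_add_pow_eq_sum _ _ _ _ _ _ hv]
  simp only [Aent_succ, map_sum, map_mul, map_pow, map_natCast]

noncomputable def degreePoly (N : ℕ) (α β : ℝ) (v : ℕ) : ℝ[X] :=
  (C β + C (1 - β) * X) ^ v * (C α * X + C (1 - α)) ^ (N - v)

theorem degreePoly_eq_sum (N : ℕ) (α β : ℝ) {v : ℕ} (hv : v ≤ N) :
    degreePoly N α β v = ∑ w ∈ range (N + 1), C (Aent (N + 1) α β w v) * X ^ w := by
  simpa only [degreePoly, algebraMap_eq, mul_one, one_pow] using
    pow_mul_pow_eq_sum_Aent α β (X : ℝ[X]) 1 hv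

theorem coeff_degreePoly (N : ℕ) (α β : ℝ) {u v : ℕ} (hu : u ≤ N) (hv : v ≤ N) :
    (degreePoly N α β v).coeff u = Aent (N + 1) α β u v := by
  simp only [degreePoly_eq_sum N α β hv, finsetSum_coeff, coeff_C_mul_X_pow,
    sum_ite_eq, mem_range, Nat.lt_succ_iff.mpr hu, if_true]

theorem degreePoly_compose (N : ℕ) (α₁ α₂ β₁ β₂ : ℝ) {v : ℕ} (hv : v ≤ N) :
    degreePoly N (α₁ * (1 - β₂) + (1 - α₁) * α₂) (β₁ * (1 - α₂) + (1 - β₁) * β₂) v =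
      ∑ w ∈ range (N + 1), C (Aent (N + 1) α₁ β₁ w v) * degreePoly N α₂ β₂ w := by
  set Q : ℝ[X] := C β₂ + C (1 - β₂) * X
  set S : ℝ[X] := C α₂ * X + C (1 - α₂)
  have hpresent : C (β₁ * (1 - α₂) + (1 - β₁) * β₂) +
      C (1 - (β₁ * (1 - α₂) + (1 - β₁) * β₂)) * X = C β₁ * S + C (1 - β₁) * Q := by
    simp only [Q, S, map_add, map_mul, map_sub, map_one]; ring
  have habsent : C (α₁ * (1 - β₂) + (1 - α₁) * α₂) * X +
      C (1 - (α₁ * (1 - β₂) + (1 - α₁) * α₂)) = C α₁ * Q + C (1 - α₁) * S := by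
    simp only [Q, S, map_add, map_mul, map_sub, map_one]; ring
  simp only [degreePoly, hpresent, habsent, ← mul_assoc]
  simpa only [algebraMap_eq] using pow_mul_pow_eq_sum_Aent α₁ β₁ Q S hv

theorem Amat_semigroup_general (n : ℕ) (α₁ α₂ β₁ β₂ : ℝ) :
    Amat n α₂ β₂ * Amat n α₁ β₁ =
      Amat n (α₁ * (1 - β₂) + (1 - α₁) * α₂) (β₁ * (1 - α₂) + (1 - β₁) * β₂) := by
  ext u v
  obtain ⟨N, rfl⟩ : ∃ N, n = N + 1 := ⟨n - 1, by have := u.2; omega⟩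
  have hu : (u : ℕ) ≤ N := Nat.lt_succ_iff.mp u.2
  have hv : (v : ℕ) ≤ N := Nat.lt_succ_iff.mp v.2
  rw [Matrix.mul_apply, Amat, ← coeff_degreePoly N _ _ hu hv, degreePoly_compose N α₁ α₂ β₁ β₂ hv,
    finsetSum_coeff, ← Fin.sum_univ_eq_sum_range]
  refine sum_congr rfl fun w _ => ?_
  rw [coeff_C_mul, coeff_degreePoly N α₂ β₂ hu (Nat.lt_succ_iff.mp w.2), mul_comm]
  rfl

theorem Amat_semigroup (n : ℕ) (α₁ α₂ β₁ β₂ : ℝ)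
    (hα₁ : α₁ ∈ Set.Icc (0 : ℝ) 1) (hα₂ : α₂ ∈ Set.Icc (0 : ℝ) 1)
    (hβ₁ : β₁ ∈ Set.Icc (0 : ℝ) 1) (hβ₂ : β₂ ∈ Set.Icc (0 : ℝ) 1) :
    Amat n α₂ β₂ * Amat n α₁ β₁ =
      Amat n (α₁ * (1 - β₂) + (1 - α₁) * α₂) (β₁ * (1 - α₂) + (1 - β₁) * β₂) :=
  Amat_semigroup_general n α₁ α₂ β₁ β₂
end
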